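/- Let c ∈ B(0,M)^k and let c* ∈ M be an optimal codebook. For i ≠ j, if x ∈ V_i(c*) ∩ V_j(c) ∩ B(0,M), then |⟨x − (c_i + c_j)/2, c_i − c_j⟩| ≤ 4√2 M ‖c − c*‖ and dist(x, ∂V_i(c*)) ≤ (4√2 M / B) ‖c − c*‖, where ∂V_i(c*) is the boundary of the Voronoi cell V_i(c*) and ‖c − c*‖² = Σ_{i=1}^k ‖c_i − c_i*‖². -/

import Mathlib

open MeasureTheory Metric

noncomputable section

variable {H : Type*} [NormedAddCommGroup H] [InnerProductSpace ℝ H] [MeasurableSpace H]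

/-- `qgamma k c x = min_j ‖x - c j‖²`. -/
def qgamma (k : ℕ) (c : Fin k → H) (x : H) : ℝ := ⨅ j : Fin k, ‖x - c j‖ ^ 2

/-- distortion (risk) of a codebook. -/
def qrisk (k : ℕ) (P : Measure H) (c : Fin k → H) : ℝ := ∫ x, qgamma k c x ∂P

/-- the set of optimal codebooks. -/
def qopt (k : ℕ) (P : Measure H) : Set (Fin k → H) :=
  {c | ∀ c' : Fin k → H, qrisk k P c ≤ qrisk k P c'}

/-- the `i`-th (closed) Voronoi cell of the codebook `c`. -/
def vcell (k : ℕ) (c : Fin k → H) (i : Fin k) : Set H :=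
  {x | ∀ j : Fin k, ‖x - c i‖ ≤ ‖x - c j‖}

/-- `B`, the minimal separation between code points of optimal codebooks. -/
def qB (k : ℕ) (P : Measure H) : ℝ :=
  sInf {b | ∃ c ∈ qopt k P, ∃ i j : Fin k, i ≠ j ∧ b = ‖c i - c j‖}

/-- `p_min`, the minimal mass of a Voronoi cell of an optimal codebook. -/
def qpmin (k : ℕ) (P : Measure H) : ℝ :=
  sInf {p | ∃ c ∈ qopt k P, ∃ i : Fin k, p = (P (vcell k c i)).toReal}

/-- `N_{c*}`, the union of the boundaries between Voronoi cells. -/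
def nbd (k : ℕ) (c : Fin k → H) : Set H :=
  ⋃ (i : Fin k) (j : Fin k) (_ : i ≠ j), vcell k c i ∩ vcell k c j

/-- the weight function `p(t)`, the maximal mass of the closed `t`-neighborhood
of `N_{c*}` over optimal codebooks `c*`. -/
def pweight (k : ℕ) (P : Measure H) (t : ℝ) : ℝ :=
  sSup {p | ∃ c ∈ qopt k P, p = (P (cthickening t (nbd k c))).toReal}

/-- `P` is `M`-bounded: its support is contained in the closed ball `B(0,M)`. -/
def mbounded (P : Measure H) (M : ℝ) : Prop := P (closedBall (0 : H) M)ᶜ = 0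

/-- the support of `P` contains more than `k` points. -/
def suppGT (P : Measure H) (k : ℕ) : Prop :=
  ∀ S : Finset H, S.card ≤ k → P ((S : Set H)ᶜ) ≠ 0

/-- the margin condition with radius `r0`. -/
def margin (k : ℕ) (P : Measure H) (M r0 : ℝ) : Prop :=
  0 < r0 ∧ mbounded P M ∧
    ∀ t : ℝ, 0 ≤ t → t ≤ r0 → pweight k P t ≤ qB k P * qpmin k P * t / (128 * M ^ 2)

/-!
Since `x` is closer to `cs i` than to `cs j` but closer to `c j` than to `c i`, the triangle
inequality bounds both `‖x - c i‖ - ‖x - c j‖` and `‖x - cs j‖ - ‖x - cs i‖` by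
`‖c i - cs i‖ + ‖c j - cs j‖ ≤ √2 ‖c - cs‖`; with all points in `B(0, M)` the identity
`2 ⟪x - (a + b) / 2, a - b⟫ = ‖x - b‖² - ‖x - a‖²` turns this into the bound on the inner products.
The inner product for `cs` divided by `‖cs i - cs j‖` is the distance from `x` to the bisector of
`cs i` and `cs j`, and the segment from `x` to its projection on the bisector crosses
`∂V_i(cs)`. The real work is that optimal codebooks lie in `B(0, M)` and that `B > 0`: otherwise
relocating a redundant code point to a far support point, projecting an outlying code point onto
the ball, or merging two close code points would strictly lower the distortion.
-/

open scoped RealInnerProductSpace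

theorem abs_norm_sub_sub_norm_sub_le {G : Type*} [SeminormedAddCommGroup G] {x a b a' b' : G}
    (h' : ‖x - a'‖ ≤ ‖x - b'‖) (h : ‖x - b‖ ≤ ‖x - a‖) :
    |‖x - a‖ - ‖x - b‖| ≤ ‖a - a'‖ + ‖b - b'‖ ∧ |‖x - a'‖ - ‖x - b'‖| ≤ ‖a - a'‖ + ‖b - b'‖ := by
  have ha : ‖x - a‖ ≤ ‖x - a'‖ + ‖a - a'‖ := by
    simpa only [norm_sub_rev a'] using norm_sub_le_norm_sub_add_norm_sub x a' a
  have hb : ‖x - b'‖ ≤ ‖x - b‖ + ‖b - b'‖ := norm_sub_le_norm_sub_add_norm_sub x b b'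
  constructor <;> rw [abs_le] <;> constructor <;>
    linarith [norm_nonneg (a - a'), norm_nonneg (b - b')]

theorem add_le_sqrt_two_mul_sqrt_sum_sq {ι : Type*} [Fintype ι] (f : ι → ℝ) {i j : ι}
    (hij : i ≠ j) : f i + f j ≤ √2 * √(∑ l, f l ^ 2) := by
  classical
  have hpair : f i ^ 2 + f j ^ 2 ≤ ∑ l, f l ^ 2 := by
    rw [← Finset.sum_pair (f := fun l => f l ^ 2) hij]
    exact Finset.sum_le_sum_of_subset_of_nonneg (Finset.subset_univ _)
      fun l _ _ => sq_nonneg (f l)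
  rw [← Real.sqrt_mul zero_le_two]
  exact Real.le_sqrt_of_sq_le (by nlinarith [sq_nonneg (f i - f j)])

theorem Finset.exists_pos_le_dist {X : Type*} [MetricSpace X] (T : Finset X) :
    ∃ s > 0, ∀ x ∈ T, ∀ y ∈ T, x ≠ y → s ≤ dist x y := by
  classical
  rcases T.offDiag.eq_empty_or_nonempty with h | h
  · refine ⟨1, one_pos, fun x hx y hy hxy => ?_⟩
    simpa [h] using (mem_offDiag (x := (x, y))).2 ⟨hx, hy, hxy⟩
  · obtain ⟨p, hp, hmin⟩ := T.offDiag.exists_min_image (fun p => dist p.1 p.2) h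
    exact ⟨dist p.1 p.2, dist_pos.2 (mem_offDiag.1 hp).2.2,
      fun x hx y hy hxy => hmin (x, y) (mem_offDiag.2 ⟨hx, hy, hxy⟩)⟩

theorem Finset.exists_mem_forall_half_le_dist {X : Type*} [PseudoMetricSpace X] {k : ℕ}
    {T : Finset X} (hT : k < T.card) {s : ℝ} (hs : ∀ x ∈ T, ∀ y ∈ T, x ≠ y → s ≤ dist x y)
    (c : Fin k → X) : ∃ t ∈ T, ∀ m, s / 2 ≤ dist t (c m) := by
  by_contra! h
  choose f hf using h
  obtain ⟨⟨x, hx⟩, -, ⟨y, hy⟩, -, hxy, hf_eq⟩ := Finset.exists_ne_map_eq_of_card_lt_of_maps_to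
    (s := T.attach) (t := Finset.univ) (f := fun t => f t.1 t.2) (by simpa using hT)
    (fun _ _ => Finset.mem_coe.2 (Finset.mem_univ _))
  have hxy' : x ≠ y := fun h => hxy (Subtype.ext h)
  have := dist_triangle_right x y (c (f x hx))
  have := hf y hy
  rw [← hf_eq] at this
  linarith [hs x hx y hy hxy', hf x hx]

section Geometry

variable {E : Type*} [NormedAddCommGroup E] [InnerProductSpace ℝ E]

theorem two_mul_inner_sub_midpoint (x a b : E) :
    2 * ⟪x - (2 : ℝ)⁻¹ • (a + b), a - b⟫ = ‖x - b‖ ^ 2 - ‖x - a‖ ^ 2 := by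
  rw [norm_sub_sq_real, norm_sub_sq_real]
  simp only [inner_sub_left, inner_sub_right, inner_add_left, real_inner_smul_left]
  rw [real_inner_comm b x, real_inner_comm a x, real_inner_comm b a,
    real_inner_self_eq_norm_sq a, real_inner_self_eq_norm_sq b]
  ring

theorem abs_inner_sub_midpoint_le {x a b : E} {R e : ℝ} (ha : ‖x - a‖ ≤ R) (hb : ‖x - b‖ ≤ R)
    (he : |‖x - a‖ - ‖x - b‖| ≤ e) : |⟪x - (2 : ℝ)⁻¹ • (a + b), a - b⟫| ≤ R * e := by
  have h : ⟪x - (2 : ℝ)⁻¹ • (a + b), a - b⟫ =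
      -((‖x - a‖ - ‖x - b‖) * (‖x - a‖ + ‖x - b‖)) / 2 := by
    linarith [two_mul_inner_sub_midpoint x a b]
  calc |⟪x - (2 : ℝ)⁻¹ • (a + b), a - b⟫|
      = |‖x - a‖ - ‖x - b‖| * (‖x - a‖ + ‖x - b‖) / 2 := by
        rw [h, abs_div, abs_neg, abs_mul, abs_of_nonneg (by positivity : 0 ≤ ‖x - a‖ + ‖x - b‖),
          abs_two]
    _ ≤ e * (R + R) / 2 := by gcongr; exact (abs_nonneg _).trans he
    _ = R * e := by ring

theorem inner_sub_midpoint_nonneg_of_mem_vcell {k : ℕ} {c : Fin k → E} {i : Fin k} {x : E}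
    (hx : x ∈ vcell k c i) (j : Fin k) : 0 ≤ ⟪x - (2 : ℝ)⁻¹ • (c i + c j), c i - c j⟫ := by
  have h := two_mul_inner_sub_midpoint x (c i) (c j)
  have := pow_le_pow_left₀ (norm_nonneg _) (hx j) 2
  linarith

theorem norm_sub_smul_sq_add_sq_le {M : ℝ} {x p : E} (hx : ‖x‖ ≤ M) (hM : 0 ≤ M)
    (hp : M < ‖p‖) : ‖x - (M / ‖p‖) • p‖ ^ 2 + (‖p‖ - M) ^ 2 ≤ ‖x - p‖ ^ 2 := by
  have hn : 0 < ‖p‖ := hM.trans_lt hp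
  rw [norm_sub_sq_real, norm_sub_sq_real, real_inner_smul_right, norm_smul, Real.norm_eq_abs,
    abs_of_nonneg (by positivity)]
  have hinner : ⟪x, p⟫ ≤ M * ‖p‖ := (real_inner_le_norm x p).trans (by gcongr)
  have hMp : M / ‖p‖ * ‖p‖ = M := div_mul_cancel₀ _ hn.ne'
  have key : (1 - M / ‖p‖) * ⟪x, p⟫ ≤ (1 - M / ‖p‖) * (M * ‖p‖) :=
    mul_le_mul_of_nonneg_left hinner (by linarith [(div_le_one hn).2 hp.le])
  have hsq : (M / ‖p‖) ^ 2 * ‖p‖ ^ 2 = M ^ 2 := by rw [← mul_pow, hMp]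
  nlinarith

theorem IsPreconnected.inter_frontier_nonempty {X : Type*} [TopologicalSpace X] {s t : Set X}
    (hs : IsPreconnected s) {x y : X} (hx : x ∈ s ∩ t) (hy : y ∈ s ∩ closure tᶜ) :
    (s ∩ frontier t).Nonempty := by
  by_contra h
  have hint : closure t ∩ s ⊆ interior t := fun z hz => by
    by_contra hz_int
    exact h ⟨z, hz.2, hz.1, hz_int⟩
  have hsub : s ⊆ interior t := hs.subset_of_closure_inter_subset isOpen_interior
    ⟨x, hx.1, hint ⟨subset_closure hx.2, hx.1⟩⟩
    ((Set.inter_subset_inter_left _ (closure_mono interior_subset)).trans hint)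
  rw [closure_compl] at hy
  exact hy.2 (hsub hy.1)

theorem infDist_frontier_vcell_le {k : ℕ} {c : Fin k → E} {i j : Fin k} (hij : c i ≠ c j)
    {x : E} (hx : x ∈ vcell k c i) :
    infDist x (frontier (vcell k c i)) ≤
      ⟪x - (2 : ℝ)⁻¹ • (c i + c j), c i - c j⟫ / ‖c i - c j‖ := by
  set m := (2 : ℝ)⁻¹ • (c i + c j)
  set a := c i - c j
  set f := ⟪x - m, a⟫
  have ha : 0 < ‖a‖ := norm_pos_iff.2 (sub_ne_zero.2 hij)
  have hf : 0 ≤ f := inner_sub_midpoint_nonneg_of_mem_vcell hx j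
  -- `y` is the orthogonal projection of `x` onto the bisector of `c i` and `c j`
  set y := x - (f / ‖a‖ ^ 2) • a
  have hxy : dist x y = f / ‖a‖ := by
    rw [dist_eq_norm, sub_sub_cancel, norm_smul, Real.norm_of_nonneg (by positivity)]
    field_simp
  have hy : ∀ t : ℝ, ⟪y - t • a - m, a⟫ = -(t * ‖a‖ ^ 2) := by
    intro t
    have : y - t • a - m = (x - m) - (f / ‖a‖ ^ 2 + t) • a := by
      simp only [y, add_smul]
      abel
    rw [this, inner_sub_left, real_inner_smul_left, real_inner_self_eq_norm_sq]
    field_simp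
    ring
  have hy_closure : y ∈ closure (vcell k c i)ᶜ := by
    have hlim : Filter.Tendsto (fun t : ℝ => y - t • a) (nhdsWithin 0 (Set.Ioi 0)) (nhds y) :=
      ((by fun_prop : Continuous fun t : ℝ => y - t • a).tendsto' 0 y (by simp)).mono_left
        nhdsWithin_le_nhds
    refine mem_closure_of_tendsto hlim (eventually_nhdsWithin_of_forall fun t ht hmem => ?_)
    have := inner_sub_midpoint_nonneg_of_mem_vcell hmem j
    rw [hy t] at this
    have : 0 < t * ‖a‖ ^ 2 := mul_pos ht (by positivity)
    linarith
  obtain ⟨z, hz, hz_frontier⟩ := (convex_segment x y).isPreconnected.inter_frontier_nonempty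
    ⟨left_mem_segment ℝ x y, hx⟩ ⟨right_mem_segment ℝ x y, hy_closure⟩
  calc infDist x (frontier (vcell k c i)) ≤ dist x z := infDist_le_dist_of_mem hz_frontier
    _ ≤ dist x y := by simpa [dist_comm] using segment_subset_closedBall_left x y hz
    _ = f / ‖a‖ := hxy

end Geometry

section Distortion

variable {E : Type*} [NormedAddCommGroup E] {k : ℕ}

theorem qgamma_le (c : Fin k → E) (x : E) (j : Fin k) : qgamma k c x ≤ ‖x - c j‖ ^ 2 :=
  ciInf_le (Set.finite_range _).bddBelow j

theorem exists_qgamma_eq [NeZero k] (c : Fin k → E) (x : E) :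
    ∃ m, qgamma k c x = ‖x - c m‖ ^ 2 :=
  let ⟨m, hm⟩ := exists_eq_ciInf_of_finite (f := fun j => ‖x - c j‖ ^ 2)
  ⟨m, hm.symm⟩

theorem qgamma_eq_iff_mem_vcell [NeZero k] {c : Fin k → E} {i : Fin k} {x : E} :
    qgamma k c x = ‖x - c i‖ ^ 2 ↔ x ∈ vcell k c i := by
  refine ⟨fun h j => ?_, fun hx => (qgamma_le c x i).antisymm (le_ciInf fun j => ?_)⟩
  · exact (pow_le_pow_iff_left₀ (norm_nonneg _) (norm_nonneg _) two_ne_zero).1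
      (h ▸ qgamma_le c x j)
  · exact pow_le_pow_left₀ (norm_nonneg _) (hx j) 2

theorem continuous_qgamma [NeZero k] (c : Fin k → E) : Continuous (qgamma k c) := by
  have : qgamma k c = fun x => Finset.univ.inf' Finset.univ_nonempty fun j => ‖x - c j‖ ^ 2 :=
    funext fun x => (Finset.inf'_univ_eq_ciInf _).symm
  rw [this]
  exact Continuous.finset_inf'_apply _ fun j _ => by fun_prop

theorem isClosed_vcell (c : Fin k → E) (i : Fin k) : IsClosed (vcell k c i) := by
  simp only [vcell, Set.ofPred_forall]
  exact isClosed_iInter fun j => isClosed_le (by fun_prop) (by fun_prop)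

theorem qgamma_update_le [NeZero k] (c : Fin k → E) (i j : Fin k) (x : E) :
    qgamma k (Function.update c j (c i)) x ≤
      qgamma k c x + ‖c i - c j‖ * (2 * ‖x - c j‖ + ‖c i - c j‖) := by
  obtain ⟨m, hm⟩ := exists_qgamma_eq c x
  have hd : 0 ≤ ‖c i - c j‖ * (2 * ‖x - c j‖ + ‖c i - c j‖) := by positivity
  rcases eq_or_ne m j with rfl | hne
  · have htri : ‖x - c i‖ ≤ ‖x - c m‖ + ‖c i - c m‖ := by
      simpa only [norm_sub_rev (c i)] using norm_sub_le_norm_sub_add_norm_sub x (c m) (c i)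
    calc qgamma k (Function.update c m (c i)) x ≤ ‖x - c i‖ ^ 2 := by
          simpa using qgamma_le (Function.update c m (c i)) x m
      _ ≤ (‖x - c m‖ + ‖c i - c m‖) ^ 2 := pow_le_pow_left₀ (norm_nonneg _) htri 2
      _ = _ := by rw [hm]; ring
  · calc qgamma k (Function.update c j (c i)) x ≤ ‖x - c m‖ ^ 2 := by
          simpa [Function.update_of_ne hne] using qgamma_le (Function.update c j (c i)) x m
      _ ≤ _ := by linarith

theorem qgamma_update_add_indicator_le [NeZero k] {c : Fin k → E} {l : Fin k} {x x₀ : E} {ε : ℝ}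
    (hx : ∃ m ≠ l, ‖x - c m‖ ^ 2 ≤ qgamma k c x) (hε : 0 ≤ ε) (hx₀ : ∀ m, ε ≤ dist x₀ (c m)) :
    qgamma k (Function.update c l x₀) x + (ball x₀ (ε / 4)).indicator (fun _ => ε ^ 2 / 2) x ≤
      qgamma k c x := by
  by_cases hb : x ∈ ball x₀ (ε / 4)
  · rw [Set.indicator_of_mem hb]
    have hnear : qgamma k (Function.update c l x₀) x ≤ (ε / 4) ^ 2 := by
      refine (qgamma_le _ x l).trans ?_
      rw [Function.update_self, ← dist_eq_norm]
      exact pow_le_pow_left₀ dist_nonneg (mem_ball.1 hb).le 2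
    have hfar : (3 * ε / 4) ^ 2 ≤ qgamma k c x := le_ciInf fun m => by
      rw [← dist_eq_norm]
      have := dist_triangle x₀ x (c m)
      exact pow_le_pow_left₀ (by positivity)
        (by linarith [hx₀ m, mem_ball'.1 hb]) 2
    linarith
  · obtain ⟨m, hml, hm⟩ := hx
    rw [Set.indicator_of_notMem hb, add_zero]
    exact (qgamma_le _ x m).trans (by rwa [Function.update_of_ne hml])

theorem qgamma_update_smul_add_indicator_le [InnerProductSpace ℝ E] [NeZero k]
    {c : Fin k → E} {l : Fin k} {M : ℝ} {x : E} (hx : ‖x‖ ≤ M) (hM : 0 ≤ M)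
    (hl : M < ‖c l‖) :
    qgamma k (Function.update c l ((M / ‖c l‖) • c l)) x +
        (vcell k c l).indicator (fun _ => (‖c l‖ - M) ^ 2) x ≤ qgamma k c x := by
  set c' := Function.update c l ((M / ‖c l‖) • c l)
  have hproj : ‖x - c' l‖ ^ 2 + (‖c l‖ - M) ^ 2 ≤ ‖x - c l‖ ^ 2 := by
    simpa [c'] using norm_sub_smul_sq_add_sq_le hx hM hl
  by_cases hxl : x ∈ vcell k c l
  · rw [Set.indicator_of_mem hxl, qgamma_eq_iff_mem_vcell.2 hxl]
    linarith [qgamma_le c' x l]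
  · rw [Set.indicator_of_notMem hxl, add_zero]
    obtain ⟨m, hm⟩ := exists_qgamma_eq c x
    rw [hm]
    refine (qgamma_le c' x m).trans ?_
    rcases eq_or_ne m l with rfl | hne
    · linarith [sq_nonneg (‖c m‖ - M)]
    · simp [c', Function.update_of_ne hne]

end Distortion

section Risk

variable {F : Type*} [NormedAddCommGroup F] [MeasurableSpace F] {k : ℕ} {P : Measure F}
  {M : ℝ}

theorem ae_norm_le (hbd : mbounded P M) : ∀ᵐ x ∂P, ‖x‖ ≤ M :=
  measure_eq_zero_iff_ae_notMem.1 hbd |>.mono fun _ hx => by simpa using hx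

theorem integrable_qgamma [OpensMeasurableSpace F] [IsFiniteMeasure P] [NeZero k]
    (hbd : mbounded P M) (c : Fin k → F) : Integrable (qgamma k c) P := by
  refine Integrable.mono' (integrable_const ((M + ‖c 0‖) ^ 2))
    (continuous_qgamma c).aestronglyMeasurable ((ae_norm_le hbd).mono fun x hx => ?_)
  have hγ : 0 ≤ qgamma k c x := le_ciInf fun _ => sq_nonneg _
  rw [Real.norm_of_nonneg hγ]
  exact (qgamma_le c x 0).trans
    (pow_le_pow_left₀ (norm_nonneg _) ((norm_sub_le _ _).trans (by gcongr)) 2)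

theorem qrisk_add_integral_le [OpensMeasurableSpace F] [IsFiniteMeasure P] [NeZero k]
    (hbd : mbounded P M) {c c' : Fin k → F} {g : F → ℝ} (hg : Integrable g P)
    (h : ∀ᵐ x ∂P, qgamma k c' x + g x ≤ qgamma k c x) :
    qrisk k P c' + ∫ x, g x ∂P ≤ qrisk k P c := by
  rw [qrisk, qrisk, ← integral_add (integrable_qgamma hbd c') hg]
  exact integral_mono_ae ((integrable_qgamma hbd c').add hg) (integrable_qgamma hbd c) h

/-- `c l` can be moved anywhere without increasing the distortion. -/
def IsRedundantCodepoint (P : Measure F) (c : Fin k → F) (l : Fin k) : Prop :=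
  ∀ᵐ x ∂P, ∃ m ≠ l, ‖x - c m‖ ^ 2 ≤ qgamma k c x

theorem isRedundantCodepoint_of_measure_vcell_eq_zero [NeZero k] {c : Fin k → F} {l : Fin k}
    (h : P (vcell k c l) = 0) : IsRedundantCodepoint P c l := by
  filter_upwards [measure_eq_zero_iff_ae_notMem.1 h] with x hx
  obtain ⟨m, hm⟩ := exists_qgamma_eq c x
  exact ⟨m, fun hml => hx (hml ▸ qgamma_eq_iff_mem_vcell.1 hm), hm.ge⟩

theorem isRedundantCodepoint_update [NeZero k] (c : Fin k → F) {i j : Fin k} (hij : i ≠ j) :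
    IsRedundantCodepoint P (Function.update c j (c i)) j := by
  refine Filter.Eventually.of_forall fun x => ?_
  obtain ⟨m, hm⟩ := exists_qgamma_eq (Function.update c j (c i)) x
  rcases eq_or_ne m j with rfl | hne
  · exact ⟨i, hij, by simpa [Function.update_of_ne hij] using hm.ge⟩
  · exact ⟨m, hne, hm.ge⟩

theorem exists_finset_subset_support [HereditarilyLindelofSpace F] (hsupp : suppGT P k) :
    ∃ T : Finset F, k < T.card ∧ ↑T ⊆ P.support := by
  have hcard : ((k + 1 : ℕ) : ℕ∞) ≤ P.support.encard := by
    by_contra! h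
    obtain ⟨hfin, hncard⟩ := Set.encard_le_coe_iff_finite_ncard_le.1 (Order.le_of_lt_add_one h)
    refine hsupp hfin.toFinset (by rwa [← Set.ncard_eq_toFinset_card _ hfin]) ?_
    exact measure_mono_null (by simp) Measure.measure_compl_support
  obtain ⟨T, hTP, hT⟩ := Set.exists_subset_encard_eq hcard
  have hTfin := Set.finite_of_encard_eq_coe hT
  refine ⟨hTfin.toFinset, ?_, by simpa using hTP⟩
  rw [← Set.ncard_eq_toFinset_card _ hTfin, Set.ncard_def, hT, ENat.toNat_natCast]
  exact k.lt_succ_self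

theorem qrisk_update_add_le [OpensMeasurableSpace F] [IsFiniteMeasure P] [NeZero k]
    (hbd : mbounded P M) {c : Fin k → F} {l : Fin k} (hl : IsRedundantCodepoint P c l) {x₀ : F}
    {ε : ℝ} (hε : 0 ≤ ε) (hx₀ : ∀ m, ε ≤ dist x₀ (c m)) :
    qrisk k P (Function.update c l x₀) + P.real (ball x₀ (ε / 4)) * (ε ^ 2 / 2) ≤
      qrisk k P c := by
  have := qrisk_add_integral_le hbd ((integrable_const _).indicator measurableSet_ball)
    (hl.mono fun x hx => qgamma_update_add_indicator_le hx hε hx₀)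
  rwa [integral_indicator_const _ measurableSet_ball, smul_eq_mul] at this

/-- Among `k + 1` fixed support points, one is far from all `k` code points (pigeonhole); moving a
redundant code point there gains a fixed positive amount. -/
theorem exists_pos_forall_qrisk_add_le [OpensMeasurableSpace F] [HereditarilyLindelofSpace F]
    [IsFiniteMeasure P] [NeZero k] (hbd : mbounded P M) (hsupp : suppGT P k) :
    ∃ δ > 0, ∀ cs ∈ qopt k P, ∀ (c : Fin k → F) (l : Fin k),
      IsRedundantCodepoint P c l → qrisk k P cs + δ ≤ qrisk k P c := by
  obtain ⟨T, hTk, hTP⟩ := exists_finset_subset_support hsupp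
  obtain ⟨s, hs, hsT⟩ := T.exists_pos_le_dist
  have hT : T.Nonempty := Finset.card_pos.1 (by omega)
  set p := T.inf' hT fun t => P.real (ball t (s / 2 / 4))
  have hp : 0 < p := (Finset.lt_inf'_iff _).2 fun t ht =>
    ENNReal.toReal_pos ((Measure.mem_support_iff_forall t).1 (hTP ht) _
      (ball_mem_nhds t (by positivity))).ne' (measure_ne_top P _)
  refine ⟨p * ((s / 2) ^ 2 / 2), by positivity, fun cs hcs c l hl => ?_⟩
  obtain ⟨t, ht, hfar⟩ := T.exists_mem_forall_half_le_dist hTk hsT c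
  have hpt : p ≤ P.real (ball t (s / 2 / 4)) := T.inf'_le _ ht
  calc qrisk k P cs + p * ((s / 2) ^ 2 / 2)
      ≤ qrisk k P (Function.update c l t) +
          P.real (ball t (s / 2 / 4)) * ((s / 2) ^ 2 / 2) := by
        gcongr
        exact hcs _
    _ ≤ qrisk k P c := qrisk_update_add_le hbd hl (by positivity) hfar

theorem qB_le_norm_sub {cs : Fin k → F} (hcs : cs ∈ qopt k P) {i j : Fin k} (hij : i ≠ j) :
    qB k P ≤ ‖cs i - cs j‖ :=
  csInf_le ⟨0, by rintro _ ⟨_, _, _, _, _, rfl⟩; exact norm_nonneg _⟩ ⟨cs, hcs, i, j, hij, rfl⟩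

variable [OpensMeasurableSpace F] [HereditarilyLindelofSpace F] {cs : Fin k → F}

theorem measure_vcell_ne_zero_of_mem_qopt [IsFiniteMeasure P] [NeZero k] (hbd : mbounded P M)
    (hsupp : suppGT P k) (hcs : cs ∈ qopt k P) (l : Fin k) : P (vcell k cs l) ≠ 0 := fun h => by
  obtain ⟨δ, hδ, hgap⟩ := exists_pos_forall_qrisk_add_le hbd hsupp
  linarith [hgap cs hcs cs l (isRedundantCodepoint_of_measure_vcell_eq_zero h)]

/-- Radial projection onto the ball `B(0, M)` strictly decreases the distortion on the cell
of `cs l`, which has positive mass. -/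
theorem norm_le_of_mem_qopt [InnerProductSpace ℝ F] [IsFiniteMeasure P] [NeZero k]
    (hM : 0 ≤ M) (hbd : mbounded P M) (hsupp : suppGT P k) (hcs : cs ∈ qopt k P) (l : Fin k) :
    ‖cs l‖ ≤ M := by
  by_contra! hl
  have hV := (isClosed_vcell cs l).measurableSet
  have himp := qrisk_add_integral_le hbd ((integrable_const ((‖cs l‖ - M) ^ 2)).indicator hV)
    ((ae_norm_le hbd).mono fun x hx => qgamma_update_smul_add_indicator_le hx hM hl)
  rw [integral_indicator_const _ hV, smul_eq_mul] at himp
  have hgain : 0 < P.real (vcell k cs l) * (‖cs l‖ - M) ^ 2 :=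
    mul_pos (ENNReal.toReal_pos (measure_vcell_ne_zero_of_mem_qopt hbd hsupp hcs l)
      (measure_ne_top P _)) (by nlinarith)
  linarith [hcs (Function.update cs l ((M / ‖cs l‖) • cs l))]

/-- Merging `cs j` into `cs i` costs at most `d (4M + d)` with `d = ‖cs i - cs j‖`, but by
`exists_pos_forall_qrisk_add_le` it costs at least a fixed `δ > 0`. -/
theorem exists_pos_le_norm_sub_of_mem_qopt [InnerProductSpace ℝ F] [IsProbabilityMeasure P]
    [NeZero k] (hM : 0 ≤ M) (hbd : mbounded P M) (hsupp : suppGT P k) :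
    ∃ b > 0, ∀ cs ∈ qopt k P, ∀ i j, i ≠ j → b ≤ ‖cs i - cs j‖ := by
  obtain ⟨δ, hδ, hgap⟩ := exists_pos_forall_qrisk_add_le hbd hsupp
  refine ⟨min 1 (δ / (4 * M + 1)), by positivity, fun cs hcs i j hij => ?_⟩
  by_contra! hd
  set d := ‖cs i - cs j‖
  have hcs_le := norm_le_of_mem_qopt hM hbd hsupp hcs
  have hmerge : qrisk k P (Function.update cs j (cs i)) + -(d * (4 * M + d)) ≤ qrisk k P cs := by
    have := qrisk_add_integral_le hbd (c := cs) (c' := Function.update cs j (cs i))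
      (integrable_const (-(d * (4 * M + d))))
      ((ae_norm_le hbd).mono fun x hx => by
        have hxj : ‖x - cs j‖ ≤ 2 * M := (norm_sub_le _ _).trans (by linarith [hcs_le j])
        have := qgamma_update_le cs i j x
        have : d * (2 * ‖x - cs j‖ + d) ≤ d * (4 * M + d) :=
          mul_le_mul_of_nonneg_left (by linarith) (norm_nonneg _)
        linarith)
    rwa [integral_const, probReal_univ, one_smul] at this
  have hcost : d * (4 * M + d) < δ :=
    calc d * (4 * M + d) ≤ d * (4 * M + 1) := by gcongr; exact hd.le.trans (min_le_left _ _)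
      _ < δ / (4 * M + 1) * (4 * M + 1) := by gcongr; exact hd.trans_le (min_le_right _ _)
      _ = δ := div_mul_cancel₀ _ (by positivity)
  linarith [hgap cs hcs _ j (isRedundantCodepoint_update cs hij)]

theorem qB_pos [InnerProductSpace ℝ F] [IsProbabilityMeasure P] (hM : 0 ≤ M)
    (hbd : mbounded P M) (hsupp : suppGT P k) (hcs : cs ∈ qopt k P) {i j : Fin k} (hij : i ≠ j) :
    0 < qB k P := by
  have : NeZero k := ⟨i.pos.ne'⟩
  obtain ⟨b, hb, hsep⟩ := exists_pos_le_norm_sub_of_mem_qopt hM hbd hsupp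
  exact hb.trans_le (le_csInf ⟨_, cs, hcs, i, j, hij, rfl⟩
    (by rintro _ ⟨c, hc, i, j, hij, rfl⟩; exact hsep c hc i j hij))

end Risk

theorem stmt10_general [BorelSpace H] [SecondCountableTopology H]
    (k : ℕ) (P : Measure H) [IsProbabilityMeasure P]
    (M : ℝ) (hM : 0 < M) (hbd : mbounded P M) (hsupp : suppGT P k)
    (c cs : Fin k → H) (hc : ∀ i, ‖c i‖ ≤ M) (hcs : cs ∈ qopt k P)
    (i j : Fin k) (hij : i ≠ j) (x : H)
    (hx : x ∈ vcell k cs i ∩ vcell k c j ∩ closedBall (0 : H) M) :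
    |(inner ℝ (x - (2 : ℝ)⁻¹ • (c i + c j)) (c i - c j) : ℝ)| ≤
      4 * Real.sqrt 2 * M * Real.sqrt (∑ l, ‖c l - cs l‖ ^ 2) ∧
    infDist x (frontier (vcell k cs i)) ≤
      (4 * Real.sqrt 2 * M / qB k P) * Real.sqrt (∑ l, ‖c l - cs l‖ ^ 2) := by
  obtain ⟨⟨hxcs, hxc⟩, hxM⟩ := hx
  have : NeZero k := ⟨i.pos.ne'⟩
  have hnear : ∀ a : H, ‖a‖ ≤ M → ‖x - a‖ ≤ 2 * M := fun a ha =>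
    (norm_sub_le x a).trans (by linarith [mem_closedBall_zero_iff.1 hxM])
  have hcs_le := norm_le_of_mem_qopt hM.le hbd hsupp hcs
  set σ := √(∑ l, ‖c l - cs l‖ ^ 2)
  set e := ‖c i - cs i‖ + ‖c j - cs j‖
  have he : 2 * M * e ≤ 4 * √2 * M * σ := by
    have : 0 ≤ √2 * M * σ := by positivity
    calc 2 * M * e ≤ 2 * M * (√2 * σ) := by
          gcongr
          exact add_le_sqrt_two_mul_sqrt_sum_sq (fun l => ‖c l - cs l‖) hij
      _ ≤ 4 * √2 * M * σ := by linarith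
  obtain ⟨hc_diff, hcs_diff⟩ := abs_norm_sub_sub_norm_sub_le (hxcs j) (hxc i)
  have hB := qB_pos hM.le hbd hsupp hcs hij
  have hBle := qB_le_norm_sub hcs hij
  refine ⟨(abs_inner_sub_midpoint_le (hnear _ (hc i)) (hnear _ (hc j)) hc_diff).trans he, ?_⟩
  calc infDist x (frontier (vcell k cs i))
      ≤ ⟪x - (2 : ℝ)⁻¹ • (cs i + cs j), cs i - cs j⟫ / ‖cs i - cs j‖ :=
        infDist_frontier_vcell_le (norm_pos_iff.1 (hB.trans_le hBle) |> sub_ne_zero.1) hxcs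
    _ ≤ 2 * M * e / qB k P := div_le_div₀ (by positivity)
        ((le_abs_self _).trans (abs_inner_sub_midpoint_le (hnear _ (hcs_le i))
          (hnear _ (hcs_le j)) hcs_diff)) hB hBle
    _ ≤ 4 * √2 * M * σ / qB k P := by gcongr
    _ = 4 * √2 * M / qB k P * σ := by ring

/-- Lemma 4.2: points with differing labels are close to Voronoi boundaries. -/
theorem stmt10 [BorelSpace H] [SecondCountableTopology H] [CompleteSpace H]
    (k : ℕ) (hk : 2 ≤ k) (P : Measure H) [IsProbabilityMeasure P]
    (M : ℝ) (hM : 0 < M) (hbd : mbounded P M) (hsupp : suppGT P k)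
    (c cs : Fin k → H) (hc : ∀ i, ‖c i‖ ≤ M) (hcs : cs ∈ qopt k P)
    (i j : Fin k) (hij : i ≠ j) (x : H)
    (hx : x ∈ vcell k cs i ∩ vcell k c j ∩ closedBall (0 : H) M) :
    |(inner ℝ (x - (2 : ℝ)⁻¹ • (c i + c j)) (c i - c j) : ℝ)| ≤
      4 * Real.sqrt 2 * M * Real.sqrt (∑ l, ‖c l - cs l‖ ^ 2) ∧
    infDist x (frontier (vcell k cs i)) ≤
      (4 * Real.sqrt 2 * M / qB k P) * Real.sqrt (∑ l, ‖c l - cs l‖ ^ 2) :=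
  stmt10_general k P M hM hbd hsupp c cs hc hcs i j hij x hx

end
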